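/- arXiv:1701.01316 — 4 statements merged into one kernel-verified Lean document; each statement's English description precedes it below -/
import Mathlib

section
/- Let d ≥ 1 and let v : ℝ × ℝ^d → ℝ^d be continuous and bounded, such that for each t the map x ↦ v(t,x) is measurable. Let Φ : ℝ × ℝ^d → ℝ^d satisfy Φ(0,x) = x for all x, let each map x ↦ Φ(t,x) be measurable, and assume that for every x the curve t ↦ Φ(t,x) is differentiable with ∂_tΦ(t,x) = v(t, Φ(t,x)). Let μ₀ be a finite Borel measure on ℝ^d, and set μ_t = Φ(t,·)#μ₀. Then for every continuously differentiable function φ : ℝ^d → ℝ with φ and its gradient ∇φ bounded, the function t ↦ ∫ φ dμ_t is differentiable on ℝ, with derivative (d/dt) ∫ φ dμ_t = ∫ ⟨∇φ(y), v(t,y)⟩ dμ_t(y). That is, μ_t = Φ(t,·)#μ₀ is a weak (distributional) solution of the continuity equation ∂_tμ + ∇·(v μ) = 0 with initial datum μ₀ (the push-forward representation formula of Theorem 2.3). -/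
/-!
Changing variables, `∫ φ dμ_s = ∫ φ (Φ (s, x)) dμ₀(x)`. By the chain rule the integrand has time
derivative `⟪∇φ (Φ (s, x)), v (s, Φ (s, x))⟫`, which is bounded by `sup ‖∇φ‖ * sup ‖v‖` uniformly in
`s` and `x`; a constant is integrable against the finite measure `μ₀`, so dominated convergence
allows differentiation under the integral sign.
-/

open MeasureTheory RealInnerProductSpace

theorem HasGradientAt.comp_hasDerivAt {F : Type*} [NormedAddCommGroup F] [InnerProductSpace ℝ F]
    [CompleteSpace F] {f : F → ℝ} {f' : F} {γ : ℝ → F} {γ' : F} {t : ℝ}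
    (hf : HasGradientAt f f' (γ t)) (hγ : HasDerivAt γ γ' t) :
    HasDerivAt (f ∘ γ) ⟪f', γ'⟫ t := by
  simpa only [InnerProductSpace.toDual_apply_apply] using hf.hasFDerivAt.comp_hasDerivAt t hγ

theorem ContDiff.continuous_gradient {F : Type*} [NormedAddCommGroup F] [InnerProductSpace ℝ F]
    [CompleteSpace F] {f : F → ℝ} (hf : ContDiff ℝ 1 f) : Continuous (gradient f) :=
  (InnerProductSpace.toDual ℝ F).symm.continuous.comp (hf.continuous_fderiv one_ne_zero)

theorem hasDerivAt_integral_of_norm_deriv_le {α E : Type*} [MeasurableSpace α] {μ : Measure α}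
    [IsFiniteMeasure μ] [NormedAddCommGroup E] [NormedSpace ℝ E] {F F' : ℝ → α → E} {t C : ℝ}
    (hF_meas : ∀ s, AEStronglyMeasurable (F s) μ) (hF_int : Integrable (F t) μ)
    (hF'_meas : AEStronglyMeasurable (F' t) μ) (hF'_le : ∀ s x, ‖F' s x‖ ≤ C)
    (hF : ∀ s x, HasDerivAt (F · x) (F' s x) s) :
    HasDerivAt (fun s => ∫ x, F s x ∂μ) (∫ x, F' t x ∂μ) t :=
  (hasDerivAt_integral_of_dominated_loc_of_deriv_le Filter.univ_mem
    (.of_forall hF_meas) hF_int hF'_meas (.of_forall fun x s _ => hF'_le s x)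
    (integrable_const C) (.of_forall fun x s _ => hF s x)).2

theorem stmt_2_general (d : ℕ)
    (v : ℝ × EuclideanSpace ℝ (Fin d) → EuclideanSpace ℝ (Fin d))
    (hv_bdd : ∃ C : ℝ, ∀ p, ‖v p‖ ≤ C)
    (hv_meas : ∀ t : ℝ, Measurable (fun x => v (t, x)))
    (Φ : ℝ × EuclideanSpace ℝ (Fin d) → EuclideanSpace ℝ (Fin d))
    (hΦ_meas : ∀ t : ℝ, Measurable (fun x => Φ (t, x)))
    (hΦ_ode : ∀ x, ∀ t : ℝ, HasDerivAt (fun s => Φ (s, x)) (v (t, Φ (t, x))) t)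
    (μ₀ : Measure (EuclideanSpace ℝ (Fin d))) [IsFiniteMeasure μ₀]
    (φ : EuclideanSpace ℝ (Fin d) → ℝ) (hφ : ContDiff ℝ 1 φ)
    (hφ_bdd : ∃ C : ℝ, ∀ y, |φ y| ≤ C ∧ ‖gradient φ y‖ ≤ C) :
    ∀ t : ℝ,
      HasDerivAt (fun s => ∫ y, φ y ∂(μ₀.map (fun x => Φ (s, x))))
        (∫ y, ⟪gradient φ y, v (t, y)⟫ ∂(μ₀.map (fun x => Φ (t, x)))) t := by
  intro t
  obtain ⟨Cv, hCv⟩ := hv_bdd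
  obtain ⟨Cφ, hCφ⟩ := hφ_bdd
  have hφ_meas := hφ.continuous.measurable
  have hgrad_meas := hφ.continuous_gradient.measurable
  rw [integral_map (hΦ_meas t).aemeasurable (hgrad_meas.inner (hv_meas t)).aestronglyMeasurable]
  have h_push (s : ℝ) : ∫ y, φ y ∂(μ₀.map (fun x => Φ (s, x))) = ∫ x, φ (Φ (s, x)) ∂μ₀ :=
    integral_map (hΦ_meas s).aemeasurable hφ.continuous.aestronglyMeasurable
  simp only [h_push]
  refine hasDerivAt_integral_of_norm_deriv_le (C := Cφ * Cv)
    (F' := fun s x => ⟪gradient φ (Φ (s, x)), v (s, Φ (s, x))⟫)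
    (fun s => (hφ_meas.comp (hΦ_meas s)).aestronglyMeasurable)
    (.of_bound (hφ_meas.comp (hΦ_meas t)).aestronglyMeasurable Cφ (.of_forall fun x => (hCφ _).1))
    ((hgrad_meas.comp (hΦ_meas t)).inner ((hv_meas t).comp (hΦ_meas t))).aestronglyMeasurable
    (fun s x => ?_) (fun s x => ?_)
  · calc ‖⟪gradient φ (Φ (s, x)), v (s, Φ (s, x))⟫‖
        ≤ ‖gradient φ (Φ (s, x))‖ * ‖v (s, Φ (s, x))‖ := norm_inner_le_norm _ _
      _ ≤ Cφ * Cv := mul_le_mul (hCφ _).2 (hCv _) (norm_nonneg _) ((norm_nonneg _).trans (hCφ 0).2)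
  · exact ((hφ.differentiable one_ne_zero _).hasGradientAt).comp_hasDerivAt (hΦ_ode x s)

/-- The push-forward of a measure along the flow of a bounded continuous
time-dependent vector field is a weak (distributional) solution of the
continuity equation (the push-forward representation formula of Theorem 2.3). -/
theorem stmt_2 (d : ℕ) (hd : 1 ≤ d)
    (v : ℝ × EuclideanSpace ℝ (Fin d) → EuclideanSpace ℝ (Fin d))
    (hv_cont : Continuous v) (hv_bdd : ∃ C : ℝ, ∀ p, ‖v p‖ ≤ C)
    (hv_meas : ∀ t : ℝ, Measurable (fun x => v (t, x)))
    (Φ : ℝ × EuclideanSpace ℝ (Fin d) → EuclideanSpace ℝ (Fin d))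
    (hΦ0 : ∀ x, Φ (0, x) = x)
    (hΦ_meas : ∀ t : ℝ, Measurable (fun x => Φ (t, x)))
    (hΦ_ode : ∀ x, ∀ t : ℝ, HasDerivAt (fun s => Φ (s, x)) (v (t, Φ (t, x))) t)
    (μ₀ : Measure (EuclideanSpace ℝ (Fin d))) [IsFiniteMeasure μ₀]
    (φ : EuclideanSpace ℝ (Fin d) → ℝ) (hφ : ContDiff ℝ 1 φ)
    (hφ_bdd : ∃ C : ℝ, ∀ y, |φ y| ≤ C ∧ ‖gradient φ y‖ ≤ C) :
    ∀ t : ℝ,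
      HasDerivAt (fun s => ∫ y, φ y ∂(μ₀.map (fun x => Φ (s, x))))
        (∫ y, ⟪gradient φ y, v (t, y)⟫ ∂(μ₀.map (fun x => Φ (t, x)))) t :=
  stmt_2_general d v hv_bdd hv_meas Φ hΦ_meas hΦ_ode μ₀ φ hφ hφ_bdd
end

section
/- Let d ≥ 1, let f : ℝ^d → ℝ^d be continuously differentiable with bounded divergence, and let ρ : ℝ × ℝ^d → ℝ be a nonnegative continuously differentiable function such that there is a compact set K ⊆ ℝ^d with ρ(t,x) = 0 whenever x ∉ K, and such that the continuity equation ∂_t ρ(t,x) + ∇·(f(x) ρ(t,x)) = 0 holds pointwise. Then for every real p > 1, the function t ↦ ∫_{ℝ^d} ρ(t,x)^p dx is differentiable, and (d/dt) ∫ ρ(t,x)^p dx ≤ (p−1) ‖∇·f‖_∞ ∫ ρ(t,x)^p dx for every t. (Proposition 2.5, classical-solution form: the L^p norms of the density grow at most exponentially with rate controlled by the divergence of the velocity field.) -/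
open MeasureTheory RealInnerProductSpace

/-- The divergence of a vector field on `ℝ^d`. -/
noncomputable def diverg {d : ℕ}
    (f : EuclideanSpace ℝ (Fin d) → EuclideanSpace ℝ (Fin d))
    (x : EuclideanSpace ℝ (Fin d)) : ℝ :=
  ∑ i : Fin d, fderiv ℝ f x (EuclideanSpace.single i 1) i

/-!
Differentiating under the integral sign, `d/dt ∫ ρ^p = ∫ p ρ^(p-1) ∂ₜρ`. By the continuity
equation and the product rule `∇·(ρ^p f) = ρ^p ∇·f + p ρ^(p-1) ⟨f, ∇ρ⟩`, the integrand equals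
`(1 - p) ρ^p ∇·f - ∇·(ρ^p f)`. The flux `ρ^p f` is `C¹` with compact support, so its divergence
integrates to zero, and `(1 - p) ρ^p ∇·f ≤ (p - 1) C ρ^p` pointwise.
-/

section ParametricIntegral

variable {E G : Type*} [NormedAddCommGroup E] [NormedSpace ℝ E]
  [NormedAddCommGroup G] [NormedSpace ℝ G]

theorem DifferentiableAt.hasDerivAt_comp_prodMk_left {F : ℝ × E → G} {s : ℝ} {x : E}
    (hF : DifferentiableAt ℝ F (s, x)) :
    HasDerivAt (fun u => F (u, x)) (fderiv ℝ F (s, x) (1, 0)) s :=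
  hF.hasFDerivAt.comp_hasDerivAt s ((hasDerivAt_id s).prodMk (hasDerivAt_const s x))

theorem ContDiff.continuous_deriv_comp_prodMk_left {F : ℝ × E → G} (hF : ContDiff ℝ 1 F) :
    Continuous fun z : ℝ × E => deriv (fun u => F (u, z.2)) z.1 := by
  have hderiv (z : ℝ × E) : deriv (fun u => F (u, z.2)) z.1 = fderiv ℝ F z (1, 0) :=
    ((hF.differentiable one_ne_zero z).hasDerivAt_comp_prodMk_left).deriv
  simp_rw [hderiv]
  exact (hF.continuous_fderiv one_ne_zero).clm_apply continuous_const

variable [MeasurableSpace E] [OpensMeasurableSpace E]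

theorem hasDerivAt_integral_of_contDiff_of_isCompact (μ : Measure E) [IsFiniteMeasureOnCompacts μ]
    {F : ℝ × E → G} (hF : ContDiff ℝ 1 F) {K : Set E} (hK : IsCompact K)
    (hFK : ∀ s, ∀ x ∉ K, F (s, x) = 0) (t : ℝ) :
    HasDerivAt (fun s => ∫ x, F (s, x) ∂μ) (∫ x, deriv (fun s => F (s, x)) t ∂μ) t := by
  set F' : ℝ → E → G := fun s x => deriv (fun u => F (u, x)) s
  have hF'cont : Continuous fun z : ℝ × E => F' z.1 z.2 := hF.continuous_deriv_comp_prodMk_left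
  have hF'K (s : ℝ) (x : E) (hx : x ∉ K) : F' s x = 0 := by
    simp only [F', hFK _ x hx, deriv_const]
  have hint (s : ℝ) : Integrable (fun x => F (s, x)) μ :=
    (hF.continuous.comp (Continuous.prodMk_right s)).integrable_of_hasCompactSupport
      (HasCompactSupport.intro hK (hFK s))
  have hint' : Integrable (F' t) μ :=
    (hF'cont.comp (Continuous.prodMk_right t)).integrable_of_hasCompactSupport
      (HasCompactSupport.intro hK (hF'K t))
  obtain ⟨M, hM⟩ := (isCompact_closedBall t 1 |>.prod hK).exists_bound_of_continuousOn
    hF'cont.continuousOn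
  have hbound : ∀ x, ∀ s ∈ Metric.ball t 1, ‖F' s x‖ ≤ K.indicator (fun _ => M) x := by
    intro x s hs
    by_cases hx : x ∈ K
    · rw [Set.indicator_of_mem hx]
      exact hM (s, x) ⟨Metric.ball_subset_closedBall hs, hx⟩
    · rw [Set.indicator_of_notMem hx, hF'K s x hx, norm_zero]
  have hderiv (s : ℝ) (x : E) : HasDerivAt (fun u => F (u, x)) (F' s x) s :=
    (hF.differentiable one_ne_zero (s, x)).hasDerivAt_comp_prodMk_left.differentiableAt.hasDerivAt
  exact (hasDerivAt_integral_of_dominated_loc_of_deriv_le (Metric.ball_mem_nhds t one_pos)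
    (.of_forall fun s => (hint s).aestronglyMeasurable) (hint t) hint'.aestronglyMeasurable
    (.of_forall hbound) ((integrableOn_const hK.measure_lt_top.ne).integrable_indicator
      hK.measurableSet)
    (.of_forall fun x s _ => hderiv s x)).2

end ParametricIntegral

theorem integral_fderiv_apply_eq_zero {E G : Type*} [NormedAddCommGroup E] [NormedSpace ℝ E]
    [FiniteDimensional ℝ E] [MeasurableSpace E] [BorelSpace E] (μ : Measure E)
    [μ.IsAddHaarMeasure] [NormedAddCommGroup G] [NormedSpace ℝ G]
    {g : E → G} (hg : ContDiff ℝ 1 g) (hsupp : HasCompactSupport g) (v : E) :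
    ∫ x, fderiv ℝ g x v ∂μ = 0 := by
  have hg' : Integrable (fun x => fderiv ℝ g x v) μ :=
    ((hg.continuous_fderiv one_ne_zero).clm_apply continuous_const).integrable_of_hasCompactSupport
      (hsupp.fderiv_apply (𝕜 := ℝ) v)
  -- integration by parts against the constant function `1`
  have := integral_smul_fderiv_eq_neg_fderiv_smul_of_integrable (μ := μ) (f := fun _ => (1 : ℝ))
    (g := g) (v := v) (by simp) (by simpa using hg')
    (by simpa using hg.continuous.integrable_of_hasCompactSupport hsupp)
    (fun _ _ => differentiableAt_const _) (fun x _ => hg.differentiable one_ne_zero x)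
  simpa using this

section Divergence

variable {d : ℕ}

theorem EuclideanSpace.sum_apply_single_mul {ι : Type*} [Fintype ι] [DecidableEq ι]
    (L : EuclideanSpace ℝ ι →L[ℝ] ℝ) (v : EuclideanSpace ℝ ι) :
    ∑ i, L (EuclideanSpace.single i 1) * v i = L v := by
  conv_rhs => rw [← (EuclideanSpace.basisFun ι ℝ).sum_repr v]
  simp [map_sum, mul_comm]

theorem continuous_diverg {f : EuclideanSpace ℝ (Fin d) → EuclideanSpace ℝ (Fin d)}
    (hf : ContDiff ℝ 1 f) : Continuous (diverg f) :=
  continuous_finsetSum _ fun i _ =>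
    (EuclideanSpace.proj (𝕜 := ℝ) i).continuous.comp
      ((hf.continuous_fderiv one_ne_zero).clm_apply continuous_const)

theorem diverg_smul {φ : EuclideanSpace ℝ (Fin d) → ℝ}
    {f : EuclideanSpace ℝ (Fin d) → EuclideanSpace ℝ (Fin d)} {x : EuclideanSpace ℝ (Fin d)}
    (hφ : DifferentiableAt ℝ φ x) (hf : DifferentiableAt ℝ f x) :
    diverg (fun y => φ y • f y) x = φ x * diverg f x + fderiv ℝ φ x (f x) := by
  simp only [diverg, fderiv_fun_smul hφ hf]
  simp [Finset.sum_add_distrib, Finset.mul_sum,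
    ← EuclideanSpace.sum_apply_single_mul (fderiv ℝ φ x) (f x)]

theorem HasCompactSupport.diverg {f : EuclideanSpace ℝ (Fin d) → EuclideanSpace ℝ (Fin d)}
    (hf : HasCompactSupport f) : HasCompactSupport (diverg f) :=
  (hf.fderiv (𝕜 := ℝ)).mono' fun x hx =>
    subset_tsupport _ fun h => hx (by simp [_root_.diverg, h])

theorem integral_diverg_eq_zero {f : EuclideanSpace ℝ (Fin d) → EuclideanSpace ℝ (Fin d)}
    (hf : ContDiff ℝ 1 f) (hsupp : HasCompactSupport f) : ∫ x, diverg f x = 0 := by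
  have hint (i : Fin d) : Integrable (fun x => fderiv ℝ f x (EuclideanSpace.single i 1)) :=
    ((hf.continuous_fderiv one_ne_zero).clm_apply continuous_const).integrable_of_hasCompactSupport
      (hsupp.fderiv_apply (𝕜 := ℝ) _)
  have hcoord (i : Fin d) : Integrable fun x => fderiv ℝ f x (EuclideanSpace.single i 1) i :=
    (EuclideanSpace.proj (𝕜 := ℝ) i).integrable_comp (hint i)
  have hcoord_integral (i : Fin d) : ∫ x, fderiv ℝ f x (EuclideanSpace.single i 1) i = 0 := by
    change ∫ x, EuclideanSpace.proj (𝕜 := ℝ) i (fderiv ℝ f x (EuclideanSpace.single i 1)) = 0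
    rw [(EuclideanSpace.proj (𝕜 := ℝ) i).integral_comp_comm (hint i),
      integral_fderiv_apply_eq_zero volume hf hsupp, map_zero]
  simp only [diverg]
  rw [integral_finsetSum _ fun i _ => hcoord i]
  exact Finset.sum_eq_zero fun i _ => hcoord_integral i

end Divergence

theorem deriv_rpow_eq_of_continuityEquation {d : ℕ}
    {f : EuclideanSpace ℝ (Fin d) → EuclideanSpace ℝ (Fin d)}
    {ρ : ℝ × EuclideanSpace ℝ (Fin d) → ℝ} {p t : ℝ} {x : EuclideanSpace ℝ (Fin d)}
    (hp : 1 ≤ p) (hρ : DifferentiableAt ℝ ρ (t, x)) (hf : DifferentiableAt ℝ f x)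
    (hρx : 0 ≤ ρ (t, x))
    (hPDE : deriv (fun s => ρ (s, x)) t
        + (ρ (t, x) * diverg f x + ⟪f x, gradient (fun y => ρ (t, y)) x⟫) = 0) :
    deriv (fun s => ρ (s, x) ^ p) t
      = (1 - p) * (ρ (t, x) ^ p * diverg f x) - diverg (fun y => ρ (t, y) ^ p • f y) x := by
  have htime : DifferentiableAt ℝ (fun s => ρ (s, x)) t :=
    hρ.comp t (differentiableAt_id.prodMk (differentiableAt_const x))
  have hspace : DifferentiableAt ℝ (fun y => ρ (t, y)) x :=
    hρ.comp x ((differentiableAt_const t).prodMk differentiableAt_id)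
  have hgrad : ⟪f x, gradient (fun y => ρ (t, y)) x⟫ = fderiv ℝ (fun y => ρ (t, y)) x (f x) := by
    rw [real_inner_comm, ← toDual_gradient, InnerProductSpace.toDual_apply_apply]
  have hpow : ρ (t, x) ^ (p - 1) * ρ (t, x) = ρ (t, x) ^ p := by
    conv_rhs => rw [← sub_add_cancel p 1, Real.rpow_add' hρx (by linarith), Real.rpow_one]
  rw [(htime.hasDerivAt.rpow_const (Or.inr hp)).deriv,
    diverg_smul (hspace.rpow_const (Or.inr hp)) hf,
    (hspace.hasFDerivAt.rpow_const (Or.inr hp)).fderiv]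
  rw [hgrad] at hPDE
  simp only [FunLike.coe_smul, Pi.smul_apply, smul_eq_mul]
  linear_combination (p * ρ (t, x) ^ (p - 1)) * hPDE - p * diverg f x * hpow

theorem stmt_7_general (d : ℕ)
    (f : EuclideanSpace ℝ (Fin d) → EuclideanSpace ℝ (Fin d))
    (hf : ContDiff ℝ 1 f)
    (C : ℝ) (hC : ∀ x, |diverg f x| ≤ C)
    (ρ : ℝ × EuclideanSpace ℝ (Fin d) → ℝ)
    (hρ : ContDiff ℝ 1 ρ) (hρpos : ∀ p, 0 ≤ ρ p)
    (K : Set (EuclideanSpace ℝ (Fin d))) (hK : IsCompact K)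
    (hρsupp : ∀ (t : ℝ) (x : EuclideanSpace ℝ (Fin d)), x ∉ K → ρ (t, x) = 0)
    (hPDE : ∀ (t : ℝ) (x : EuclideanSpace ℝ (Fin d)),
      deriv (fun s => ρ (s, x)) t
        + (ρ (t, x) * diverg f x + ⟪f x, gradient (fun y => ρ (t, y)) x⟫) = 0) :
    ∀ p : ℝ, 1 < p → ∀ t : ℝ,
      ∃ D : ℝ, HasDerivAt (fun s => ∫ x, ρ (s, x) ^ p) D t ∧
        D ≤ (p - 1) * C * ∫ x, ρ (t, x) ^ p := by
  intro p hp t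
  have hρp : ContDiff ℝ 1 fun z => ρ z ^ p :=
    (Real.contDiff_rpow_const_of_le (n := 1) (by exact_mod_cast hp.le)).comp hρ
  have hρpK (s : ℝ) (x : EuclideanSpace ℝ (Fin d)) (hx : x ∉ K) : ρ (s, x) ^ p = 0 := by
    rw [hρsupp s x hx, Real.zero_rpow (by linarith)]
  refine ⟨_, hasDerivAt_integral_of_contDiff_of_isCompact volume hρp hK hρpK t, ?_⟩
  set φ := fun x => ρ (t, x) ^ p
  have hφ : ContDiff ℝ 1 φ := hρp.comp (contDiff_const.prodMk contDiff_id)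
  have hφK : HasCompactSupport φ := .intro hK (hρpK t)
  have hφ_int : Integrable φ := hφ.continuous.integrable_of_hasCompactSupport hφK
  have hφdiv_int : Integrable fun x => φ x * diverg f x :=
    (hφ.continuous.mul (continuous_diverg hf)).integrable_of_hasCompactSupport hφK.mul_right
  have hflux_int : Integrable (diverg fun y => φ y • f y) :=
    (continuous_diverg (hφ.smul hf)).integrable_of_hasCompactSupport hφK.smul_right.diverg
  have hpointwise (x : EuclideanSpace ℝ (Fin d)) : -(φ x * diverg f x) ≤ C * φ x := by
    nlinarith [(abs_le.mp (hC x)).1, Real.rpow_nonneg (hρpos (t, x)) p]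
  calc ∫ x, deriv (fun s => ρ (s, x) ^ p) t
      = ∫ x, (1 - p) * (φ x * diverg f x) - diverg (fun y => φ y • f y) x := by
        refine integral_congr_ae (.of_forall fun x => ?_)
        exact deriv_rpow_eq_of_continuityEquation hp.le (hρ.differentiable one_ne_zero _)
          (hf.differentiable one_ne_zero x) (hρpos _) (hPDE t x)
    _ = (p - 1) * ∫ x, -(φ x * diverg f x) := by
        rw [integral_sub (hφdiv_int.const_mul _) hflux_int,
          integral_diverg_eq_zero (f := fun y => φ y • f y) (hφ.smul hf) hφK.smul_right,
          integral_const_mul, integral_neg]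
        ring
    _ ≤ (p - 1) * ∫ x, C * φ x :=
        mul_le_mul_of_nonneg_left (integral_mono hφdiv_int.neg (hφ_int.const_mul C) hpointwise)
          (by linarith)
    _ = (p - 1) * C * ∫ x, φ x := by rw [integral_const_mul, mul_assoc]

/-- Proposition 2.5 (classical-solution form): along a classical compactly
supported nonnegative solution of the continuity equation, the `L^p` norms of
the density grow at most exponentially, with rate controlled by the divergence
of the velocity field. -/
theorem stmt_7 (d : ℕ) (hd : 1 ≤ d)
    (f : EuclideanSpace ℝ (Fin d) → EuclideanSpace ℝ (Fin d))
    (hf : ContDiff ℝ 1 f)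
    (C : ℝ) (hC : ∀ x, |diverg f x| ≤ C)
    (ρ : ℝ × EuclideanSpace ℝ (Fin d) → ℝ)
    (hρ : ContDiff ℝ 1 ρ) (hρpos : ∀ p, 0 ≤ ρ p)
    (K : Set (EuclideanSpace ℝ (Fin d))) (hK : IsCompact K)
    (hρsupp : ∀ (t : ℝ) (x : EuclideanSpace ℝ (Fin d)), x ∉ K → ρ (t, x) = 0)
    (hPDE : ∀ (t : ℝ) (x : EuclideanSpace ℝ (Fin d)),
      deriv (fun s => ρ (s, x)) t
        + (ρ (t, x) * diverg f x + ⟪f x, gradient (fun y => ρ (t, y)) x⟫) = 0) :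
    ∀ p : ℝ, 1 < p → ∀ t : ℝ,
      ∃ D : ℝ, HasDerivAt (fun s => ∫ x, ρ (s, x) ^ p) D t ∧
        D ≤ (p - 1) * C * ∫ x, ρ (t, x) ^ p :=
  stmt_7_general d f hf C hC ρ hρ hρpos K hK hρsupp hPDE
end

section
/- Let a ≤ b, a' ≤ b' be real numbers and η, η' > 0. Then the mollified indicator functions satisfy the L¹ estimate ∫_ℝ |χ^η_{[a,b]}(x) − χ^{η'}_{[a',b']}(x)| dx ≤ |η − η'| + |a − a'| + |b − b'|. (Key estimate in the proof of Lemma 4.3, giving Lipschitz dependence of the control family on its parameters in L¹ of the Lebesgue measure.) -/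
/-!
For `0 < s ≤ 1` the superlevel set `{χ^η_{[a,b]} > 1 - s}` is the interval `(a - sη, b + sη)`,
so `χ^η_{[a,b]}(x)` is the length of `{s ∈ (0,1] : a - sη < x < b + sη}` (layer cake).
The difference `|χ − χ'|(x)` is then at most the length of the symmetric difference of two such
sets of levels, and by Tonelli `∫ |χ − χ'| ≤ ∫₀¹ λ(I_s ∆ I'_s) ds`, where `I_s`, `I'_s` are the two
intervals at level `s`. Their symmetric difference has length at most the total displacement of
the endpoints, `|a − a'| + |b − b'| + 2s|η − η'|`, which integrates over `(0,1]` to the bound.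
-/

open MeasureTheory

/-- The mollified indicator function `χ^η_[a,b]`. -/
noncomputable def chiEta (a b η : ℝ) (x : ℝ) : ℝ :=
  if x < a - η ∨ b + η < x then 0
  else if x < a then (x - a + η) / η
  else if x ≤ b then 1
  else (-x + b + η) / η

open Set
open scoped symmDiff

lemma ofReal_abs_measureReal_sub_le_measure_symmDiff {α : Type*} [MeasurableSpace α]
    {μ : Measure α} {s t : Set α} (hs : μ s ≠ ⊤) (ht : μ t ≠ ⊤) :
    ENNReal.ofReal |μ.real s - μ.real t| ≤ μ (s ∆ t) := by
  have hle : ∀ {u v : Set α}, μ u ≠ ⊤ → μ v ≠ ⊤ → μ.real u ≤ μ.real (u ∆ v) + μ.real v := by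
    intro u v hu hv
    rw [measureReal_def, measureReal_def, measureReal_def,
      ← ENNReal.toReal_add (measure_symmDiff_ne_top hu hv) hv]
    exact ENNReal.toReal_mono (by finiteness) (tsub_le_iff_right.mp le_measure_symmDiff)
  refine ENNReal.ofReal_le_of_le_toReal (abs_sub_le_iff.mpr ⟨?_, ?_⟩) <;> rw [← measureReal_def]
  · linarith [hle hs ht]
  · rw [symmDiff_comm]
    linarith [hle ht hs]

lemma volume_Ioo_symmDiff_Ioo_le (c d c' d' : ℝ) :
    volume (Ioo c d ∆ Ioo c' d') ≤ ENNReal.ofReal (|c - c'| + |d - d'|) := by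
  have hsub : Ioo c d ∆ Ioo c' d' ⊆ uIcc c c' ∪ uIcc d d' := by
    rintro x (⟨⟨h1, h2⟩, h⟩ | ⟨⟨h1, h2⟩, h⟩) <;>
      simp only [mem_Ioo, not_and_or, not_lt] at h <;>
      simp only [mem_union, mem_uIcc] <;> grind
  calc volume (Ioo c d ∆ Ioo c' d') ≤ volume (uIcc c c' ∪ uIcc d d') := measure_mono hsub
    _ ≤ volume (uIcc c c') + volume (uIcc d d') := measure_union_le _ _
    _ = ENNReal.ofReal (|c - c'| + |d - d'|) := by
      rw [Real.volume_interval, Real.volume_interval,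
        ENNReal.ofReal_add (abs_nonneg _) (abs_nonneg _), abs_sub_comm c', abs_sub_comm d']

lemma lintegral_measure_inter_setOf_mem_eq_setLIntegral {α β : Type*} [MeasurableSpace α]
    [MeasurableSpace β] {μ : Measure α} {ν : Measure β} [SFinite μ] [SFinite ν]
    {W : Set (α × β)} (hW : MeasurableSet W) {T : Set β} (hT : MeasurableSet T) :
    ∫⁻ x, ν (T ∩ {y | (x, y) ∈ W}) ∂μ = ∫⁻ y in T, μ {x | (x, y) ∈ W} ∂ν := by
  have hWT : MeasurableSet (Prod.snd ⁻¹' T ∩ W) := (measurable_snd hT).inter hW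
  calc ∫⁻ x, ν (T ∩ {y | (x, y) ∈ W}) ∂μ = μ.prod ν (Prod.snd ⁻¹' T ∩ W) :=
        (Measure.prod_apply hWT).symm
    _ = ∫⁻ y, T.indicator (fun y => μ {x | (x, y) ∈ W}) y ∂ν := by
      rw [Measure.prod_apply_symm hWT]
      congr 1 with y
      by_cases hy : y ∈ T <;> simp [hy, preimage]
    _ = ∫⁻ y in T, μ {x | (x, y) ∈ W} ∂ν := lintegral_indicator hT _

lemma setLIntegral_Ioc_zero_one_ofReal_add_two_mul {A B : ℝ} (hA : 0 ≤ A) (hB : 0 ≤ B) :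
    ∫⁻ s in Ioc (0 : ℝ) 1, ENNReal.ofReal (A + 2 * s * B) = ENNReal.ofReal (A + B) := by
  have hint : ∫ s in (0 : ℝ)..1, (A + 2 * s * B) = A + B := by
    rw [intervalIntegral.integral_add intervalIntegrable_const
      (Continuous.intervalIntegrable (by fun_prop) _ _), intervalIntegral.integral_const,
      intervalIntegral.integral_mul_const, intervalIntegral.integral_const_mul, integral_id]
    norm_num
  rw [← ofReal_integral_eq_lintegral_ofReal (Continuous.integrableOn_Ioc (by fun_prop)),
    ← intervalIntegral.integral_of_le zero_le_one, hint]
  filter_upwards [ae_restrict_mem measurableSet_Ioc] with s hs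
  exact add_nonneg hA (mul_nonneg (by linarith [hs.1]) hB)

section chiEta

variable {a b η : ℝ}

lemma chiEta_eq_max (hab : a ≤ b) (hη : 0 < η) (x : ℝ) :
    chiEta a b η x = max 0 (1 - max 0 (max ((a - x) / η) ((x - b) / η))) := by
  have hl : (x - a + η) / η = 1 - (a - x) / η := by field_simp; ring
  have hr : (-x + b + η) / η = 1 - (x - b) / η := by field_simp; ring
  have h1 : x < a - η ↔ 1 < (a - x) / η := by
    rw [one_lt_div hη]; constructor <;> intro <;> linarith
  have h2 : b + η < x ↔ 1 < (x - b) / η := by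
    rw [one_lt_div hη]; constructor <;> intro <;> linarith
  have h3 : x < a ↔ 0 < (a - x) / η := by rw [div_pos_iff_of_pos_right hη, sub_pos]
  have h4 : x ≤ b ↔ (x - b) / η ≤ 0 := by
    rw [div_le_iff₀ hη, zero_mul, sub_nonpos]
  -- the two normalised distances cannot both be positive since `a ≤ b`
  have hsum : (a - x) / η + (x - b) / η ≤ 0 := by
    rw [← add_div]
    exact div_nonpos_of_nonpos_of_nonneg (by linarith) hη.le
  unfold chiEta
  simp only [hl, hr, h1, h2, h3, h4]
  generalize (a - x) / η = u at *
  generalize (x - b) / η = v at *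
  split_ifs <;> grind

lemma continuous_chiEta (hab : a ≤ b) (hη : 0 < η) : Continuous (chiEta a b η) := by
  rw [funext (chiEta_eq_max hab hη)]
  fun_prop

/-- The interval `{chiEta a b η > 1 - s}`, for `0 < s ≤ 1`. -/
def chiEtaLayer (a b η s : ℝ) : Set ℝ := Ioo (a - s * η) (b + s * η)

lemma measurableSet_setOf_mem_chiEtaLayer (a b η : ℝ) :
    MeasurableSet {p : ℝ × ℝ | p.1 ∈ chiEtaLayer a b η p.2} :=
  (measurableSet_lt (by fun_prop) measurable_fst).inter
    (measurableSet_lt measurable_fst (by fun_prop))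

lemma chiEta_eq_measureReal (hab : a ≤ b) (hη : 0 < η) (x : ℝ) :
    chiEta a b η x = volume.real (Ioc 0 1 ∩ {s | x ∈ chiEtaLayer a b η s}) := by
  have hset : Ioc 0 1 ∩ {s | x ∈ chiEtaLayer a b η s} =
      Ioc (max 0 (max ((a - x) / η) ((x - b) / η))) 1 := by
    ext s
    simp only [chiEtaLayer, mem_inter_iff, mem_Ioc, mem_ofPred_eq, mem_Ioo, max_lt_iff,
      div_lt_iff₀ hη]
    constructor
    · rintro ⟨⟨h0, h1⟩, h2, h3⟩
      exact ⟨⟨h0, by linarith, by linarith⟩, h1⟩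
    · rintro ⟨⟨h0, h2, h3⟩, h1⟩
      exact ⟨⟨h0, h1⟩, by linarith, by linarith⟩
  rw [measureReal_def, hset, Real.volume_Ioc, ENNReal.toReal_ofReal', chiEta_eq_max hab hη,
    max_comm]

lemma volume_chiEtaLayer_symmDiff_le {s : ℝ} (hs : 0 ≤ s) (a' b' η' : ℝ) :
    volume (chiEtaLayer a b η s ∆ chiEtaLayer a' b' η' s) ≤
      ENNReal.ofReal (|a - a'| + |b - b'| + 2 * s * |η - η'|) := by
  refine (volume_Ioo_symmDiff_Ioo_le _ _ _ _).trans (ENNReal.ofReal_le_ofReal ?_)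
  have hl : |a - s * η - (a' - s * η')| ≤ |a - a'| + s * |η - η'| := by
    rw [show a - s * η - (a' - s * η') = (a - a') - s * (η - η') by ring]
    exact (abs_sub _ _).trans_eq (by rw [abs_mul, abs_of_nonneg hs])
  have hr : |b + s * η - (b' + s * η')| ≤ |b - b'| + s * |η - η'| := by
    rw [show b + s * η - (b' + s * η') = (b - b') + s * (η - η') by ring]
    exact (abs_add_le _ _).trans_eq (by rw [abs_mul, abs_of_nonneg hs])
  linarith

lemma ofReal_abs_chiEta_sub_chiEta_le {a' b' η' : ℝ} (hab : a ≤ b) (hab' : a' ≤ b')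
    (hη : 0 < η) (hη' : 0 < η') (x : ℝ) :
    ENNReal.ofReal |chiEta a b η x - chiEta a' b' η' x| ≤
      volume (Ioc 0 1 ∩ {s | x ∈ chiEtaLayer a b η s ∆ chiEtaLayer a' b' η' s}) := by
  have hfin : ∀ T : Set ℝ, volume (Ioc (0 : ℝ) 1 ∩ T) ≠ ⊤ := fun T =>
    measure_ne_top_of_subset inter_subset_left measure_Ioc_lt_top.ne
  rw [chiEta_eq_measureReal hab hη, chiEta_eq_measureReal hab' hη']
  refine (ofReal_abs_measureReal_sub_le_measure_symmDiff (hfin _) (hfin _)).trans_eq ?_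
  rw [← inter_symmDiff_distrib_left]
  rfl

end chiEta

/-- Key estimate in the proof of Lemma 4.3: Lipschitz dependence in `L¹` of
the mollified indicator controls on their parameters. -/
theorem stmt_9 (a b a' b' η η' : ℝ) (hab : a ≤ b) (hab' : a' ≤ b')
    (hη : 0 < η) (hη' : 0 < η') :
    ∫ x : ℝ, |chiEta a b η x - chiEta a' b' η' x| ≤
      |η - η'| + |a - a'| + |b - b'| := by
  set J : ℝ → Set ℝ := fun s => chiEtaLayer a b η s ∆ chiEtaLayer a' b' η' s
  have hJ : MeasurableSet {p : ℝ × ℝ | p.1 ∈ J p.2} :=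
    (measurableSet_setOf_mem_chiEtaLayer a b η).symmDiff
      (measurableSet_setOf_mem_chiEtaLayer a' b' η')
  have hmeas : AEStronglyMeasurable (fun x => |chiEta a b η x - chiEta a' b' η' x|) volume :=
    ((continuous_chiEta hab hη).sub (continuous_chiEta hab' hη')).abs.aestronglyMeasurable
  rw [integral_eq_lintegral_of_nonneg_ae (ae_of_all _ fun _ => abs_nonneg _) hmeas]
  refine ENNReal.toReal_le_of_le_ofReal (by positivity) ?_
  calc ∫⁻ x, ENNReal.ofReal |chiEta a b η x - chiEta a' b' η' x|
      ≤ ∫⁻ x, volume (Ioc 0 1 ∩ {s | x ∈ J s}) :=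
        lintegral_mono (ofReal_abs_chiEta_sub_chiEta_le hab hab' hη hη')
    _ = ∫⁻ s in Ioc 0 1, volume (J s) :=
        lintegral_measure_inter_setOf_mem_eq_setLIntegral hJ measurableSet_Ioc
    _ ≤ ∫⁻ s in Ioc 0 1, ENNReal.ofReal (|a - a'| + |b - b'| + 2 * s * |η - η'|) :=
        setLIntegral_mono' measurableSet_Ioc fun s hs =>
          volume_chiEtaLayer_symmDiff_le hs.1.le a' b' η'
    _ = ENNReal.ofReal (|η - η'| + |a - a'| + |b - b'|) := by
      rw [setLIntegral_Ioc_zero_one_ofReal_add_two_mul (by positivity) (abs_nonneg _)]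
      ring_nf
end

section
/- Let u : ℝ → ℝ be a Lipschitz function with compact support satisfying 0 ≤ u(x) ≤ 1 for all x. Then for every ε > 0 there exist a positive integer N, heights k_1,…,k_N ∈ [0,1], and η₀ > 0 such that for every η ∈ (0, η₀] there exist real numbers a_1 ≤ b_1, …, a_N ≤ b_N for which the function s_η(x) = Σ_{i=1}^N k_i·χ^η_{[a_i,b_i]}(x) satisfies s_η(x) ≤ u(x) for all x and sup_x |u(x) − s_η(x)| ≤ ε. In particular, any nonnegative Lipschitz control with compact support can be uniformly approximated from below, up to any accuracy ε, by finite sums of mollified indicator controls with a number of terms N independent of the (sufficiently small) mollification parameter η. (Construction in Step 3 of the proof of the Main Theorem.) -/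
open Finset

noncomputable def ramp (η t : ℝ) : ℝ := max 0 (min 1 ((t + η) / η))

section Ramp

variable {η t : ℝ}

lemma ramp_nonneg : 0 ≤ ramp η t := le_max_left _ _

lemma ramp_le_one : ramp η t ≤ 1 := max_le zero_le_one (min_le_left _ _)

lemma ramp_of_le_neg (hη : 0 < η) (ht : t ≤ -η) : ramp η t = 0 :=
  max_eq_left (min_le_of_right_le (div_nonpos_of_nonpos_of_nonneg (by linarith) hη.le))

lemma ramp_of_nonneg (hη : 0 < η) (ht : 0 ≤ t) : ramp η t = 1 := by
  have : 1 ≤ (t + η) / η := by rw [le_div_iff₀ hη]; linarith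
  rw [ramp, min_eq_left this, max_eq_right zero_le_one]

lemma ramp_of_mem_Icc (hη : 0 < η) (ht : t ∈ Set.Icc (-η) 0) : ramp η t = (t + η) / η := by
  have h₀ : 0 ≤ (t + η) / η := div_nonneg (by linarith [ht.1]) hη.le
  have h₁ : (t + η) / η ≤ 1 := by rw [div_le_one hη]; linarith [ht.2]
  rw [ramp, min_eq_right h₁, max_eq_right h₀]

lemma ramp_mono (hη : 0 < η) : Monotone (ramp η) := fun s t hst => by
  unfold ramp
  gcongr

end Ramp

section ChiEta

variable {a b η x : ℝ}

lemma chiEta_eq_ramp_sub (hη : 0 < η) (hab : a ≤ b) (x : ℝ) :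
    chiEta a b η x = ramp η (x - a) - ramp η (x - (b + η)) := by
  unfold chiEta
  split_ifs with hout hleft hmid
  · rcases hout with h | h
    · rw [ramp_of_le_neg hη (by linarith), ramp_of_le_neg hη (by linarith), sub_zero]
    · rw [ramp_of_nonneg hη (by linarith), ramp_of_nonneg hη (by linarith), sub_self]
  · push Not at hout
    rw [ramp_of_mem_Icc hη ⟨by linarith, by linarith⟩, ramp_of_le_neg hη (by linarith), sub_zero]
  · rw [ramp_of_nonneg hη (by linarith), ramp_of_le_neg hη (by linarith), sub_zero]
  · push Not at hout hleft hmid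
    rw [ramp_of_nonneg hη (by linarith), ramp_of_mem_Icc hη ⟨by linarith, by linarith⟩]
    field_simp
    ring

lemma chiEta_nonneg (hη : 0 < η) (hab : a ≤ b) : 0 ≤ chiEta a b η x := by
  rw [chiEta_eq_ramp_sub hη hab]
  exact sub_nonneg.2 (ramp_mono hη (by linarith))

lemma mem_Ioo_of_chiEta_ne_zero (hη : 0 < η) (hab : a ≤ b) (h : chiEta a b η x ≠ 0) :
    x ∈ Set.Ioo (a - η) (b + η) := by
  rw [chiEta_eq_ramp_sub hη hab] at h
  constructor
  · by_contra! hx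
    rw [ramp_of_le_neg hη (by linarith), ramp_of_le_neg hη (by linarith), sub_zero] at h
    exact h rfl
  · by_contra! hx
    rw [ramp_of_nonneg hη (by linarith), ramp_of_nonneg hη (by linarith), sub_self] at h
    exact h rfl

end ChiEta

lemma sum_mul_le_sum_mul_of_ne_zero {ι : Type*} (s : Finset ι) {f f' φ : ι → ℝ}
    (hφ : ∀ i ∈ s, 0 ≤ φ i) (h : ∀ i ∈ s, φ i ≠ 0 → f i ≤ f' i) :
    ∑ i ∈ s, f i * φ i ≤ ∑ i ∈ s, f' i * φ i := by
  refine sum_le_sum fun i hi => ?_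
  by_cases hφi : φ i = 0
  · simp [hφi]
  · exact mul_le_mul_of_nonneg_right (h i hi hφi) (hφ i hi)

noncomputable def mollifiedStep (g w : ℕ → ℝ) (η : ℝ) (n : ℕ) (x : ℝ) : ℝ :=
  ∑ j : Fin n, w j * chiEta (g j) (g (j + 1) - η) η x

section MollifiedStep

variable {g w : ℕ → ℝ} {η c x : ℝ} {n : ℕ}

lemma sum_chiEta_grid (hη : 0 < η) (hg : ∀ j, g j + η ≤ g (j + 1)) (n : ℕ) (x : ℝ) :
    ∑ j : Fin n, chiEta (g j) (g (j + 1) - η) η x = ramp η (x - g 0) - ramp η (x - g n) := by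
  have hstep (j : ℕ) :
      chiEta (g j) (g (j + 1) - η) η x = ramp η (x - g j) - ramp η (x - g (j + 1)) := by
    rw [chiEta_eq_ramp_sub hη (by linarith [hg j]), sub_add_cancel]
  rw [Fin.sum_univ_eq_sum_range (fun j => chiEta (g j) (g (j + 1) - η) η x)]
  simp only [hstep]
  exact sum_range_sub' (fun j => ramp η (x - g j)) n

lemma mollifiedStep_nonneg (hη : 0 < η) (hg : ∀ j, g j + η ≤ g (j + 1)) (hw : ∀ j, 0 ≤ w j) :
    0 ≤ mollifiedStep g w η n x :=
  sum_nonneg fun j _ => mul_nonneg (hw j) (chiEta_nonneg hη (by linarith [hg j]))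

lemma mollifiedStep_le (hη : 0 < η) (hg : ∀ j, g j + η ≤ g (j + 1)) (hc : 0 ≤ c)
    (hw : ∀ j < n, chiEta (g j) (g (j + 1) - η) η x ≠ 0 → w j ≤ c) :
    mollifiedStep g w η n x ≤ c :=
  calc mollifiedStep g w η n x
      ≤ ∑ j : Fin n, c * chiEta (g j) (g (j + 1) - η) η x :=
        sum_mul_le_sum_mul_of_ne_zero _ (fun j _ => chiEta_nonneg hη (by linarith [hg j]))
          fun j _ => hw j j.isLt
    _ = c * (ramp η (x - g 0) - ramp η (x - g n)) := by rw [← mul_sum, sum_chiEta_grid hη hg]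
    _ ≤ c * 1 := by
        gcongr
        linarith [ramp_le_one (η := η) (t := x - g 0), ramp_nonneg (η := η) (t := x - g n)]
    _ = c := mul_one c

lemma le_mollifiedStep (hη : 0 < η) (hg : ∀ j, g j + η ≤ g (j + 1))
    (hx : x ∈ Set.Icc (g 0) (g n - η))
    (hw : ∀ j < n, chiEta (g j) (g (j + 1) - η) η x ≠ 0 → c ≤ w j) :
    c ≤ mollifiedStep g w η n x :=
  calc c = c * (ramp η (x - g 0) - ramp η (x - g n)) := by
        rw [ramp_of_nonneg hη (by linarith [hx.1]), ramp_of_le_neg hη (by linarith [hx.2])]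
        ring
    _ = ∑ j : Fin n, c * chiEta (g j) (g (j + 1) - η) η x := by
        rw [← mul_sum, sum_chiEta_grid hη hg]
    _ ≤ mollifiedStep g w η n x :=
        sum_mul_le_sum_mul_of_ne_zero _ (fun j _ => chiEta_nonneg hη (by linarith [hg j]))
          fun j _ => hw j j.isLt

end MollifiedStep

lemma LipschitzWith.max_zero_sub_mem_Icc {u : ℝ → ℝ} {K : NNReal} (hu : LipschitzWith K u)
    (hu₀ : ∀ x, 0 ≤ u x) {x y δ : ℝ} (hxy : |x - y| ≤ δ) :
    max 0 (u y - K * δ) ∈ Set.Icc (u x - 2 * K * δ) (u x) := by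
  have hdist : |u x - u y| ≤ K * δ :=
    calc |u x - u y| ≤ K * |x - y| := by simpa only [Real.dist_eq] using hu.dist_le_mul x y
      _ ≤ K * δ := mul_le_mul_of_nonneg_left hxy K.coe_nonneg
  obtain ⟨h₁, h₂⟩ := abs_le.1 hdist
  exact ⟨le_max_of_le_right (by linarith), max_le (hu₀ x) (by linarith)⟩

noncomputable def lowerSamples (u : ℝ → ℝ) (c : ℝ) (g : ℕ → ℝ) (j : ℕ) : ℝ :=
  max 0 (u (g j) - c)

section LowerSamples

variable {u : ℝ → ℝ} {K : NNReal} {g : ℕ → ℝ} {c δ η x : ℝ} {n : ℕ}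

lemma lowerSamples_mem_Icc (hu : ∀ x, u x ∈ Set.Icc 0 1) (hc : 0 ≤ c) (j : ℕ) :
    lowerSamples u c g j ∈ Set.Icc 0 1 :=
  ⟨le_max_left _ _, max_le zero_le_one (by linarith [(hu (g j)).2])⟩

lemma lowerSamples_mem_Icc_of_chiEta_ne_zero (hu : LipschitzWith K u) (hu₀ : ∀ x, 0 ≤ u x)
    (hg : ∀ j, g (j + 1) = g j + δ) (hη : 0 < η) (hηδ : η ≤ δ) {j : ℕ}
    (h : chiEta (g j) (g (j + 1) - η) η x ≠ 0) :
    lowerSamples u (K * δ) g j ∈ Set.Icc (u x - 2 * K * δ) (u x) := by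
  have hx := mem_Ioo_of_chiEta_ne_zero hη (by linarith [hg j]) h
  rw [hg j, sub_add_cancel] at hx
  exact hu.max_zero_sub_mem_Icc hu₀ (abs_le.2 ⟨by linarith [hx.1], by linarith [hx.2]⟩)

lemma mollifiedStep_lowerSamples_le (hu : LipschitzWith K u) (hu₀ : ∀ x, 0 ≤ u x)
    (hg : ∀ j, g (j + 1) = g j + δ) (hη : 0 < η) (hηδ : η ≤ δ) (x : ℝ) :
    mollifiedStep g (lowerSamples u (K * δ) g) η n x ≤ u x :=
  mollifiedStep_le hη (fun j => by linarith [hg j]) (hu₀ x) fun _ _ h =>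
    (lowerSamples_mem_Icc_of_chiEta_ne_zero hu hu₀ hg hη hηδ h).2

lemma sub_mollifiedStep_lowerSamples_le (hu : LipschitzWith K u) (hu₀ : ∀ x, 0 ≤ u x)
    (hg : ∀ j, g (j + 1) = g j + δ) (hsupp : ∀ x, u x ≠ 0 → x ∈ Set.Icc (g 0) (g n - δ))
    (hη : 0 < η) (hηδ : η ≤ δ) (x : ℝ) :
    u x - mollifiedStep g (lowerSamples u (K * δ) g) η n x ≤ 2 * K * δ := by
  have hg' (j : ℕ) : g j + η ≤ g (j + 1) := by linarith [hg j]
  by_cases hux : u x = 0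
  · have := mollifiedStep_nonneg (w := lowerSamples u (K * δ) g) (n := n) (x := x) hη hg'
      fun _ => le_max_left _ _
    linarith [mul_nonneg (mul_nonneg zero_le_two K.coe_nonneg) (hη.le.trans hηδ)]
  · have hx := hsupp x hux
    have := le_mollifiedStep hη hg' ⟨hx.1, by linarith [hx.2]⟩ fun _ _ h =>
      (lowerSamples_mem_Icc_of_chiEta_ne_zero hu hu₀ hg hη hηδ h).1
    linarith

end LowerSamples

def arithGrid (x₀ δ : ℝ) (j : ℕ) : ℝ := x₀ + j * δ

lemma arithGrid_succ (x₀ δ : ℝ) (j : ℕ) : arithGrid x₀ δ (j + 1) = arithGrid x₀ δ j + δ := by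
  simp only [arithGrid]
  push_cast
  ring

lemma mem_Icc_arithGrid {R δ x : ℝ} (hδ : 0 < δ) (hx : |x| ≤ R) :
    x ∈ Set.Icc (arithGrid (-R) δ 0) (arithGrid (-R) δ (⌈2 * R / δ⌉₊ + 1) - δ) := by
  have hceil := Nat.le_ceil (2 * R / δ)
  rw [div_le_iff₀ hδ] at hceil
  obtain ⟨hx₁, hx₂⟩ := abs_le.1 hx
  simp only [arithGrid]
  push_cast
  constructor <;> linarith

/-- Step 3 of the proof of the Main Theorem: any nonnegative Lipschitz control
with compact support and values in `[0,1]` can be uniformly approximated from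
below, within any `ε > 0`, by finite sums of mollified indicator controls,
with a number of terms `N` independent of the (sufficiently small)
mollification parameter `η`. -/
theorem stmt_11 (u : ℝ → ℝ)
    (hLip : ∃ K : NNReal, LipschitzWith K u)
    (hsupp : HasCompactSupport u)
    (hrange : ∀ x, u x ∈ Set.Icc (0 : ℝ) 1) :
    ∀ ε : ℝ, 0 < ε →
      ∃ (N : ℕ) (_ : 0 < N) (k : Fin N → ℝ) (η₀ : ℝ),
        (∀ i, k i ∈ Set.Icc (0 : ℝ) 1) ∧ 0 < η₀ ∧
        ∀ η : ℝ, η ∈ Set.Ioc (0 : ℝ) η₀ →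
          ∃ a b : Fin N → ℝ,
            (∀ i, a i ≤ b i) ∧
            (∀ x, (∑ i, k i * chiEta (a i) (b i) η x) ≤ u x) ∧
            (∀ x, |u x - ∑ i, k i * chiEta (a i) (b i) η x| ≤ ε) := by
  obtain ⟨K, hK⟩ := hLip
  intro ε hε
  obtain ⟨R, -, hR⟩ := hsupp.exists_pos_le_norm
  set δ := ε / (2 * K + 1)
  have hδ : 0 < δ := by positivity
  have hKδ : 2 * K * δ ≤ ε := by
    rw [mul_div_assoc', div_le_iff₀ (by positivity)]
    nlinarith
  set n := ⌈2 * R / δ⌉₊ + 1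
  set g := arithGrid (-R) δ
  have hu₀ (x : ℝ) : 0 ≤ u x := (hrange x).1
  have hsupp' (x : ℝ) (hux : u x ≠ 0) : x ∈ Set.Icc (g 0) (g n - δ) :=
    mem_Icc_arithGrid hδ (not_le.1 (mt (hR x) hux)).le
  refine ⟨n, Nat.succ_pos _, fun i => lowerSamples u (K * δ) g i, δ,
    fun i => lowerSamples_mem_Icc hrange (by positivity) i, hδ, fun η ⟨hη, hηδ⟩ =>
      ⟨fun i => g i, fun i => g (i + 1) - η, fun i => by linarith [arithGrid_succ (-R) δ i], ?_⟩⟩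
  have hle := mollifiedStep_lowerSamples_le (n := n) hK hu₀ (arithGrid_succ (-R) δ) hη hηδ
  refine ⟨hle, fun x => (abs_of_nonneg (sub_nonneg.2 (hle x))).trans_le ?_⟩
  exact (sub_mollifiedStep_lowerSamples_le hK hu₀ (arithGrid_succ (-R) δ) hsupp' hη hηδ x).trans hKδ
end
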